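/- Let A be an m × N real matrix, r ∈ R^N, and Ω a linear subspace of R^N containing r. Let P_Ω denote orthogonal projection onto Ω. If ρ > 0 satisfies ‖A P_Ω(Aᵀ A r)‖² ≤ ρ‖P_Ω(Aᵀ A r)‖², then ‖P_Ω(Aᵀ A r)‖² ≤ ρ‖A r‖². -/

import Mathlib

/-!
With `p = P_Ω (AᵀA r)`, self-adjointness and idempotence of `P_Ω` give
`‖p‖² = ⟪p, AᵀA r⟫ = ⟪A p, A r⟫ ≤ ‖A p‖ ‖A r‖ ≤ √ρ ‖p‖ ‖A r‖`; dividing by `‖p‖` and squaring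
gives the bound.
-/

open Matrix

theorem sq_le_mul_sq_of_sq_le_mul {x y z ρ : ℝ} (hρ : 0 ≤ ρ)
    (hxyz : x ^ 2 ≤ y * z) (hyx : y ^ 2 ≤ ρ * x ^ 2) : x ^ 2 ≤ ρ * z ^ 2 := by
  rcases (sq_nonneg x).eq_or_lt with hx | hx
  · rw [← hx]
    positivity
  · refine le_of_mul_le_mul_left ?_ hx
    calc x ^ 2 * x ^ 2 ≤ (y * z) * (y * z) := mul_self_le_mul_self hx.le hxyz
      _ = y ^ 2 * z ^ 2 := by ring
      _ ≤ ρ * x ^ 2 * z ^ 2 := by gcongr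
      _ = x ^ 2 * (ρ * z ^ 2) := by ring

section

variable {𝕜 E F : Type*} [RCLike 𝕜] [NormedAddCommGroup E] [InnerProductSpace 𝕜 E]
  [NormedAddCommGroup F] [InnerProductSpace 𝕜 F] [FiniteDimensional 𝕜 E] [FiniteDimensional 𝕜 F]

open RCLike in
theorem LinearMap.re_inner_apply_starProjection_adjoint_comp (T : E →ₗ[𝕜] F) (K : Submodule 𝕜 E)
    (v : E) :
    re (inner 𝕜 (T (K.starProjection (T.adjoint (T v)))) (T v)) =
      ‖K.starProjection (T.adjoint (T v))‖ ^ 2 := by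
  rw [← LinearMap.adjoint_inner_right, K.re_inner_starProjection_eq_normSq, K.starProjection_apply,
    Submodule.coe_norm]

theorem LinearMap.norm_sq_starProjection_adjoint_comp_le (T : E →ₗ[𝕜] F) (K : Submodule 𝕜 E)
    (v : E) {ρ : ℝ} (hρ : 0 ≤ ρ)
    (h : ‖T (K.starProjection (T.adjoint (T v)))‖ ^ 2 ≤
      ρ * ‖K.starProjection (T.adjoint (T v))‖ ^ 2) :
    ‖K.starProjection (T.adjoint (T v))‖ ^ 2 ≤ ρ * ‖T v‖ ^ 2 := by
  refine sq_le_mul_sq_of_sq_le_mul hρ ?_ h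
  rw [← T.re_inner_apply_starProjection_adjoint_comp K v]
  exact re_inner_le_norm _ _

end

theorem Matrix.toEuclideanLin_conjTranspose_mul_self {m n 𝕜 : Type*} [RCLike 𝕜] [Fintype m]
    [Fintype n] [DecidableEq m] [DecidableEq n] (A : Matrix m n 𝕜) :
    (Aᴴ * A).toEuclideanLin = A.toEuclideanLin.adjoint ∘ₗ A.toEuclideanLin := by
  rw [toLpLin_mul_same, toEuclideanLin_conjTranspose_eq_adjoint]

theorem proj_grad_norm_bound_general {m N : ℕ} (A : Matrix (Fin m) (Fin N) ℝ)
    (r : EuclideanSpace ℝ (Fin N)) (Ω : Submodule ℝ (EuclideanSpace ℝ (Fin N)))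
    (ρ : ℝ) (hρ : 0 < ρ)
    (h : ‖Matrix.toEuclideanLin A
        ((Ω.orthogonalProjectionOnto (Matrix.toEuclideanLin (Aᵀ * A) r) :
          EuclideanSpace ℝ (Fin N)))‖ ^ 2
      ≤ ρ * ‖(Ω.orthogonalProjectionOnto (Matrix.toEuclideanLin (Aᵀ * A) r) :
          EuclideanSpace ℝ (Fin N))‖ ^ 2) :
    ‖(Ω.orthogonalProjectionOnto (Matrix.toEuclideanLin (Aᵀ * A) r) :
        EuclideanSpace ℝ (Fin N))‖ ^ 2
      ≤ ρ * ‖Matrix.toEuclideanLin A r‖ ^ 2 := by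
  rw [← conjTranspose_eq_transpose_of_trivial, toEuclideanLin_conjTranspose_mul_self,
    ← Submodule.starProjection_apply] at h ⊢
  exact (toEuclideanLin A).norm_sq_starProjection_adjoint_comp_le Ω r hρ.le h

/-- If `r ∈ Ω` and `‖A P_Ω(AᵀA r)‖² ≤ ρ ‖P_Ω(AᵀA r)‖²`, then
`‖P_Ω(AᵀA r)‖² ≤ ρ ‖A r‖²`. -/
theorem proj_grad_norm_bound {m N : ℕ} (A : Matrix (Fin m) (Fin N) ℝ)
    (r : EuclideanSpace ℝ (Fin N)) (Ω : Submodule ℝ (EuclideanSpace ℝ (Fin N)))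
    (hr : r ∈ Ω) (ρ : ℝ) (hρ : 0 < ρ)
    (h : ‖Matrix.toEuclideanLin A
        ((Ω.orthogonalProjectionOnto (Matrix.toEuclideanLin (Aᵀ * A) r) :
          EuclideanSpace ℝ (Fin N)))‖ ^ 2
      ≤ ρ * ‖(Ω.orthogonalProjectionOnto (Matrix.toEuclideanLin (Aᵀ * A) r) :
          EuclideanSpace ℝ (Fin N))‖ ^ 2) :
    ‖(Ω.orthogonalProjectionOnto (Matrix.toEuclideanLin (Aᵀ * A) r) :
        EuclideanSpace ℝ (Fin N))‖ ^ 2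
      ≤ ρ * ‖Matrix.toEuclideanLin A r‖ ^ 2 :=
  proj_grad_norm_bound_general A r Ω ρ hρ h
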